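/- Let M be a product-complete module over a ring R (i.e., Add(M) is closed under arbitrary direct products). Then Add(M) = Prod(M), where Add(M) is the class of direct summands of coproducts of copies of M and Prod(M) is the class of direct summands of products of copies of M. -/

import Mathlib

open CategoryTheory

universe u
variable (R : Type u) [Ring R]


/-- `Add(M)`: direct summands of coproducts of copies of `M`. -/
noncomputable def AddCl (M : ModuleCat.{u} R) : Set (ModuleCat.{u} R) :=
  {N | ∃ (X : Type u) (K : ModuleCat.{u} R),
    Nonempty ((↥N × ↥K) ≃ₗ[R] (X →₀ ↥M))}

/-- `Prod(M)`: direct summands of products of copies of `M`. -/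
noncomputable def ProdCl (M : ModuleCat.{u} R) : Set (ModuleCat.{u} R) :=
  {N | ∃ (X : Type u) (K : ModuleCat.{u} R),
    Nonempty ((↥N × ↥K) ≃ₗ[R] (X → ↥M))}

/-- `M` is product-complete: `Add(M)` is closed under arbitrary direct products. -/
noncomputable def ProductComplete (M : ModuleCat.{u} R) : Prop :=
  ∀ (ι : Type u) (f : ι → ModuleCat.{u} R), (∀ i, f i ∈ AddCl R M) →
    ModuleCat.of R (∀ i, ↥(f i)) ∈ AddCl R M

namespace Stmt5Aux

variable {R} {N N' : Type u} [AddCommGroup N] [Module R N] [AddCommGroup N'] [Module R N']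

theorem lsum_map_add {α : Type*} {G : Type*} [AddCommGroup G] (l : List α) (f g : α → G) :
    (l.map fun a => f a + g a).sum = (l.map f).sum + (l.map g).sum := by
  induction l with
  | nil => simp
  | cons a l ih => simp only [List.map_cons, List.sum_cons, ih]; abel

theorem lsum_map_neg {α : Type*} {G : Type*} [AddCommGroup G] (l : List α) (f : α → G) :
    (l.map fun a => -f a).sum = -(l.map f).sum := by
  induction l with
  | nil => simp
  | cons a l ih => simp only [List.map_cons, List.sum_cons, ih]; abel

theorem lsum_map_zero {α : Type*} {G : Type*} [AddCommGroup G] (l : List α) :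
    (l.map fun _ => (0 : G)).sum = 0 := by
  induction l with
  | nil => simp
  | cons a l ih => simp [ih]

theorem lsum_apply_pi {α : Type*} {I : Type*} {G : Type*} [AddCommMonoid G] (l : List α) (f : α → (I → G)) (i : I) :
    (l.map f).sum i = (l.map fun a => f a i).sum := by
  induction l with
  | nil => simp
  | cons a l ih => simp [ih]

theorem lsum_apply_finsupp {α : Type*} {X : Type*} {M : Type*} [AddCommMonoid M]
    (l : List α) (f : α → (X →₀ M)) (x : X) :
    ((l.map f).sum) x = (l.map fun a => (f a) x).sum := by
  induction l with
  | nil => simp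
  | cons a l ih => simp [ih]

/-- A finite "pp system": `n` auxiliary unknowns; each equation is a list of terms,
`(r, none)` meaning `r • v` (the distinguished variable), `(r, some j)` meaning `r • y j`. -/
structure Sys (R : Type u) [Ring R] : Type u where
  n : ℕ
  eqs : List (List (R × Option (Fin n)))

/-- The matrix subgroup of `N` defined by the system `σ`. -/
def USet (σ : Sys R) (N : Type u) [AddCommGroup N] [Module R N] : AddSubgroup N where
  carrier := {v | ∃ y : Fin σ.n → N,
    ∀ eq ∈ σ.eqs, (eq.map fun t => t.1 • t.2.elim v y).sum = 0}
  zero_mem' := by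
    refine ⟨0, fun eq _ => ?_⟩
    have : (eq.map fun t => t.1 • t.2.elim (0 : N) (0 : Fin _ → N)) = eq.map fun _ => (0 : N) := by
      apply List.map_congr_left; intro t _; cases ht : t.2 <;> simp [ht]
    rw [this, lsum_map_zero]
  add_mem' := by
    rintro a b ⟨y, hy⟩ ⟨z, hz⟩
    refine ⟨y + z, fun eq heq => ?_⟩
    have : (eq.map fun t => t.1 • t.2.elim (a + b) (y + z)) =
        eq.map fun t => (t.1 • t.2.elim a y) + (t.1 • t.2.elim b z) := by
      apply List.map_congr_left; intro t _; cases ht : t.2 <;> simp [ht, smul_add]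
    rw [this, lsum_map_add, hy eq heq, hz eq heq, add_zero]
  neg_mem' := by
    rintro a ⟨y, hy⟩
    refine ⟨-y, fun eq heq => ?_⟩
    have : (eq.map fun t => t.1 • t.2.elim (-a) (-y)) =
        eq.map fun t => -(t.1 • t.2.elim a y) := by
      apply List.map_congr_left; intro t _; cases ht : t.2 <;> simp [ht]
    rw [this, lsum_map_neg, hy eq heq, neg_zero]

theorem mem_USet_iff {σ : Sys R} {v : N} : v ∈ USet σ N ↔
    ∃ y : Fin σ.n → N, ∀ eq ∈ σ.eqs, (eq.map fun t => t.1 • t.2.elim v y).sum = 0 :=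
  Iff.rfl

theorem mem_USet_map (f : N →ₗ[R] N') {σ : Sys R} {v : N} (hv : v ∈ USet σ N) :
    f v ∈ USet σ N' := by
  obtain ⟨y, hy⟩ := hv
  refine ⟨f ∘ y, fun eq heq => ?_⟩
  have : (eq.map fun t => t.1 • t.2.elim (f v) (f ∘ y)) = eq.map (f ∘ fun t => t.1 • t.2.elim v y) := by
    apply List.map_congr_left; intro t _; cases ht : t.2 <;> simp [ht]
  rw [this, ← List.map_map, ← map_list_sum f, hy eq heq, map_zero]

theorem mem_USet_pi {I : Type u} {σ : Sys R} {v : I → N} :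
    v ∈ USet σ (I → N) ↔ ∀ i, v i ∈ USet σ N := by
  constructor
  · intro hv i
    exact mem_USet_map (LinearMap.proj i) hv
  · intro hv
    choose y hy using fun i => mem_USet_iff.mp (hv i)
    refine mem_USet_iff.mpr ⟨fun j i => y i j, fun eq heq => ?_⟩
    funext i
    rw [Pi.zero_apply, lsum_apply_pi]
    have h2 : (eq.map fun t => (t.1 • t.2.elim v fun j i => y i j) i)
        = eq.map fun t => t.1 • t.2.elim (v i) (y i) := by
      apply List.map_congr_left; intro t _; cases ht : t.2 <;> simp [ht]
    rw [h2, hy i eq heq]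

theorem mem_USet_finsupp {X : Type u} {σ : Sys R} {M : Type u} [AddCommGroup M] [Module R M]
    {v : X →₀ M} : v ∈ USet σ (X →₀ M) ↔ ∀ x, v x ∈ USet σ M := by
  classical
  constructor
  · intro hv x
    exact mem_USet_map (Finsupp.lapply x) hv
  · intro hv
    choose w hw using fun x => mem_USet_iff.mp (hv x)
    refine mem_USet_iff.mpr ⟨fun j => (Finsupp.onFinset v.support (fun x' => if x' ∈ v.support then w x' j else 0)
      (fun a ha => by by_contra hm; simp [hm] at ha) : X →₀ M), fun eq heq => ?_⟩
    ext x
    rw [Finsupp.coe_zero, Pi.zero_apply, lsum_apply_finsupp]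
    by_cases hx : x ∈ v.support
    · have h2 : (eq.map fun t => ((t.1 • t.2.elim v fun j => (Finsupp.onFinset v.support
            (fun x' => if x' ∈ v.support then w x' j else 0) (fun a ha => by by_contra hm; simp [hm] at ha) : X →₀ M)) : X →₀ M) x)
          = eq.map fun t => t.1 • t.2.elim (v x) (w x) := by
        apply List.map_congr_left; intro t _
        cases ht : t.2 with
        | none => simp [ht]
        | some j =>
          simp only [ht, Option.elim_some, Finsupp.smul_apply, Finsupp.onFinset_apply]
          rw [if_pos hx]
      rw [h2, hw x eq heq]
    · have hvx : v x = 0 := Finsupp.notMem_support_iff.mp hx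
      have h2 : (eq.map fun t => ((t.1 • t.2.elim v fun j => (Finsupp.onFinset v.support
            (fun x' => if x' ∈ v.support then w x' j else 0) (fun a ha => by by_contra hm; simp [hm] at ha) : X →₀ M)) : X →₀ M) x)
          = eq.map fun _ => (0 : M) := by
        apply List.map_congr_left; intro t _
        cases ht : t.2 <;> simp [ht, Finsupp.onFinset_apply, hx, hvx]
      rw [h2, lsum_map_zero]



section Chase

variable {R : Type u} [Ring R]

/-- State for the diagonalization recursion. -/
structure ChSt (ι Z Mc : Type u) where
  n : ℕ
  a : ι → Mc
  z : Z
  m : ℕ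
  E : Finset Z

/-- `M` itself lies in `AddCl R M`. -/
theorem M_mem_addCl (M : ModuleCat.{u} R) : M ∈ AddCl R M := by
  refine ⟨PUnit.{u+1}, ModuleCat.of R PUnit.{u+1}, ⟨?_⟩⟩
  have e1 : ((↥M × PUnit.{u+1}) ≃ₗ[R] ↥M) :=
    LinearEquiv.ofLinear (LinearMap.fst R (↥M) PUnit.{u+1})
      (LinearMap.prod LinearMap.id 0) (by ext x; rfl) (by
        apply LinearMap.ext; rintro ⟨a, ⟨⟩⟩; rfl)
  exact e1.trans (Finsupp.LinearEquiv.finsuppUnique R (↥M) PUnit.{u+1}).symm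

theorem exists_split {M : ModuleCat.{u} R} (h : ProductComplete R M) (ι : Type u) :
    ∃ (Z : Type u) (s : (ι → ↥M) →ₗ[R] (Z →₀ ↥M)) (p : (Z →₀ ↥M) →ₗ[R] (ι → ↥M)),
      ∀ a, p (s a) = a := by
  obtain ⟨Z, K, ⟨e⟩⟩ := h ι (fun _ => M) (fun _ => M_mem_addCl M)
  refine ⟨Z, e.toLinearMap.comp (LinearMap.inl R _ _),
    (LinearMap.fst R _ _).comp e.symm.toLinearMap, fun a => ?_⟩
  show (e.symm (e ((LinearMap.inl R _ _) a))).1 = a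
  rw [LinearEquiv.symm_apply_apply]
  rfl

/-- The key "Chase lemma" consequence: under product completeness, any descending chain of
matrix subgroups of `M` stabilizes. -/
theorem chase {M : ModuleCat.{u} R} (h : ProductComplete R M) (σ : ℕ → Sys R)
    (desc : ∀ k, USet (σ (k+1)) ↥M ≤ USet (σ k) ↥M) :
    ∃ k, USet (σ k) ↥M ≤ USet (σ (k+1)) ↥M := by
  classical
  by_contra hstrict
  set W : ℕ → AddSubgroup ↥M := fun k => USet (σ k) ↥M with hW
  have Wle : ∀ {j k : ℕ}, j ≤ k → W k ≤ W j := by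
    intro j k hjk
    induction hjk with
    | refl => exact le_rfl
    | step _ ih => exact le_trans (desc _) ih
  have hstrict' : ∀ k, ∃ x ∈ W k, x ∉ W (k+1) := fun k =>
    SetLike.not_le_iff_exists.mp (fun hle => hstrict ⟨k, hle⟩)
  -- index types
  set κ : Type u := ↥M ⊕ ULift.{u} ℕ with hκ
  set ι : Type u := ULift.{u} ℕ × κ with hι
  obtain ⟨Z, s, p, hps⟩ := exists_split h ι
  -- the "V" predicate
  set Vmem : ℕ → (ι → ↥M) → Prop := fun n a =>
    (∀ q : ι, q.1.down < n → a q = 0) ∧ (∀ q : ι, a q ∈ W q.1.down) with hVmem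
  have Vsub : ∀ {n m : ℕ} {a : ι → ↥M}, Vmem n a → m ≤ n → a ∈ USet (σ m) (ι → ↥M) := by
    intro n m a ha hmn
    refine mem_USet_pi.mpr fun q => ?_
    rcases lt_or_ge q.1.down m with hq | hq
    · rw [ha.1 q (lt_of_lt_of_le hq hmn)]; exact zero_mem _
    · exact Wle hq (ha.2 q)
  -- Z is nonempty
  obtain ⟨x0, hx00, hx01⟩ := hstrict' 0
  have hZne : Nonempty Z := by
    by_contra hne
    rw [not_nonempty_iff] at hne
    have hzero : s (fun _ => x0) = 0 := Finsupp.ext fun z => hne.elim z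
    have h2 := hps (fun _ => x0)
    rw [hzero, map_zero] at h2
    have : x0 = 0 := (congrFun h2 (⟨ULift.up 0, Sum.inr (ULift.up 0)⟩ : ι)).symm
    rw [this] at hx01
    exact hx01 (zero_mem _)
  obtain ⟨z0⟩ := hZne
  -- Step 1: the diagonalization claim
  have Cl : ∃ (E : Finset Z) (n₀ : ℕ), ∀ n, n₀ ≤ n → ∀ a, Vmem n a →
      ∀ z, z ∉ E → ∀ m, (s a) z ∈ W m := by
    by_contra hCl
    push_neg at hCl
    -- hCl : ∀ E n₀, ∃ n, n₀ ≤ n ∧ ∃ a, Vmem n a ∧ ∃ z ∉ E, ∃ m, (s a) z ∉ W m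
    have hstep : ∀ st : ChSt ι Z ↥M, ∃ st' : ChSt ι Z ↥M,
        (st.n + 1 ≤ st'.n ∧ st.m ≤ st'.n) ∧ Vmem st'.n st'.a ∧ st'.z ∉ st.E ∧
        ((s st'.a) st'.z ∉ W st'.m) ∧ st'.E = st.E ∪ (s st'.a).support ∪ {st'.z} := by
      intro st
      obtain ⟨n, hn, a, ha, z, hz, m, hm⟩ := hCl st.E (max (st.n+1) st.m)
      exact ⟨⟨n, a, z, m, st.E ∪ (s a).support ∪ {z}⟩,
        ⟨(le_max_left _ _).trans hn, (le_max_right _ _).trans hn⟩, ha, hz, hm, rfl⟩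
    obtain ⟨f, hfstep⟩ : ∃ f : ℕ → ChSt ι Z ↥M, ∀ k,
        ((f k).n + 1 ≤ (f (k+1)).n ∧ (f k).m ≤ (f (k+1)).n) ∧ Vmem (f (k+1)).n (f (k+1)).a ∧
        (f (k+1)).z ∉ (f k).E ∧ ((s (f (k+1)).a) (f (k+1)).z ∉ W (f (k+1)).m) ∧
        (f (k+1)).E = (f k).E ∪ (s (f (k+1)).a).support ∪ {(f (k+1)).z} :=
      ⟨fun k => (fun st => Classical.choose (hstep st))^[k] (⟨0, 0, z0, 0, ∅⟩ : ChSt ι Z ↥M),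
        fun k => by
          simp only [Function.iterate_succ_apply']
          exact Classical.choose_spec (hstep _)⟩
    have hEmono : ∀ k, (f k).E ⊆ (f (k+1)).E := by
      intro k
      rw [(hfstep k).2.2.2.2]
      intro z hz
      simp only [Finset.mem_union]
      tauto
    have hEmono' : ∀ {j k : ℕ}, j ≤ k → (f j).E ⊆ (f k).E := by
      intro j k hjk
      induction hjk with
      | refl => exact Finset.Subset.refl _
      | step _ ih => exact Finset.Subset.trans ih (hEmono _)
    have hsupp : ∀ k, (s (f (k+1)).a).support ⊆ (f (k+1)).E := by
      intro k
      rw [(hfstep k).2.2.2.2]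
      intro z hz
      simp only [Finset.mem_union]
      tauto
    have hzE : ∀ k, (f (k+1)).z ∈ (f (k+1)).E := by
      intro k
      rw [(hfstep k).2.2.2.2]
      simp
    have hν : ∀ k, k ≤ (f k).n := by
      intro k
      induction k with
      | zero => exact Nat.zero_le _
      | succ k ih => exact (Nat.succ_le_succ ih).trans ((hfstep k).1.1)
    have hνmono' : ∀ {j k : ℕ}, j ≤ k → (f j).n ≤ (f k).n := by
      intro j k hjk
      induction hjk with
      | refl => exact le_rfl
      | step _ ih => exact ih.trans ((Nat.le_succ _).trans ((hfstep _).1.1))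
    -- the diagonal element
    set b : ι → ↥M := fun q => ∑ k ∈ Finset.range (q.1.down + 1), (f (k+1)).a q with hb
    have hb0 : ∀ (k : ℕ) (q : ι), q.1.down < (f (k+1)).n → (f (k+1)).a q = 0 :=
      fun k q hq => ((hfstep k).2.1).1 q hq
    set tail : ℕ → (ι → ↥M) := fun K q => ∑ k ∈ Finset.Ico (K+1) (q.1.down + 1), (f (k+1)).a q
      with htail
    have hdecomp : ∀ K : ℕ, b = (∑ k ∈ Finset.range (K+1), (f (k+1)).a) + tail K := by
      intro K
      funext q
      rw [Pi.add_apply, Finset.sum_apply]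
      simp only [hb, htail]
      rcases le_or_gt (K+1) (q.1.down+1) with hle | hlt
      · exact (Finset.sum_range_add_sum_Ico (fun k => (f (k+1)).a q) hle).symm
      · rw [Finset.Ico_eq_empty (by omega), Finset.sum_empty, add_zero]
        refine Finset.sum_subset (Finset.range_subset_range.mpr (by omega)) ?_
        intro k hk hnk
        rw [Finset.mem_range, not_lt] at hnk
        exact hb0 k q (by have := hν (k+1); omega)
    have htailV : ∀ K, Vmem (f (K+2)).n (tail K) := by
      intro K
      constructor
      · intro q hq
        refine Finset.sum_eq_zero fun k hk => ?_
        rw [Finset.mem_Ico] at hk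
        refine hb0 k q (lt_of_lt_of_le hq (hνmono' ?_))
        omega
      · intro q
        exact sum_mem fun k _ => ((hfstep k).2.1).2 q
    -- each z_K is in the support of s b
    have hzsupp : ∀ K, (f (K+1)).z ∈ (s b).support := by
      intro K
      have hsb : s b = s (∑ k ∈ Finset.range (K+1), (f (k+1)).a) + s (tail K) := by
        rw [hdecomp K, map_add]
      have hhead : (s (∑ k ∈ Finset.range (K+1), (f (k+1)).a)) (f (K+1)).z
          = (s (f (K+1)).a) (f (K+1)).z := by
        rw [map_sum, Finsupp.finset_sum_apply]
        refine Finset.sum_eq_single_of_mem K (Finset.self_mem_range_succ K) ?_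
        intro k hk hkK
        rw [Finset.mem_range] at hk
        have hk' : k + 1 ≤ K := by omega
        have : (f (K+1)).z ∉ (s (f (k+1)).a).support :=
          fun hmem => (hfstep K).2.2.1 (hEmono' hk' ((hsupp k) hmem))
        exact Finsupp.notMem_support_iff.mp this
      have htailW : (s (tail K)) (f (K+1)).z ∈ W ((f (K+1)).m) := by
        have h1 : tail K ∈ USet (σ ((f (K+1)).m)) (ι → ↥M) :=
          Vsub (htailV K) ((hfstep (K+1)).1.2)
        have h2 := mem_USet_map s h1
        exact mem_USet_finsupp.mp h2 ((f (K+1)).z)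
      rw [Finsupp.mem_support_iff]
      intro hzero
      have h1 : (s b) (f (K+1)).z = (s (f (K+1)).a) (f (K+1)).z + (s (tail K)) (f (K+1)).z := by
        rw [hsb, Finsupp.add_apply, hhead]
      have h2 : (s (f (K+1)).a) (f (K+1)).z
          = (s b) (f (K+1)).z - (s (tail K)) (f (K+1)).z := eq_sub_of_add_eq h1.symm
      refine (hfstep K).2.2.2.1 ?_
      rw [h2, hzero, zero_sub]
      exact neg_mem htailW
    -- the z_K are pairwise distinct
    have hzinj : Function.Injective (fun K => (⟨(f (K+1)).z, hzsupp K⟩ :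
        {z // z ∈ (s b).support})) := by
      intro j k hjk
      simp only [Subtype.mk.injEq] at hjk
      by_contra hne
      rcases lt_trichotomy j k with hlt | heq | hgt
      · have : (f (j+1)).z ∈ (f k).E := hEmono' (by omega : j+1 ≤ k) (hzE j)
        rw [hjk] at this
        exact (hfstep k).2.2.1 this
      · exact hne heq
      · have : (f (k+1)).z ∈ (f j).E := hEmono' (by omega : k+1 ≤ j) (hzE k)
        rw [← hjk] at this
        exact (hfstep j).2.2.1 this
    haveI := Finite.of_injective _ hzinj
    exact not_finite ℕ
  obtain ⟨E, n₀, hE⟩ := Cl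
  -- Step 2: cardinality contradiction
  obtain ⟨wstar, hws1, hws2⟩ := hstrict' n₀
  set aT : Set κ → (ι → ↥M) := fun T q => if q.1.down = n₀ ∧ q.2 ∈ T then wstar else 0 with haT
  have haTV : ∀ T, Vmem n₀ (aT T) := by
    intro T
    constructor
    · intro q hq
      simp only [haT]
      rw [if_neg (by rintro ⟨h1, -⟩; omega)]
    · intro q
      simp only [haT]
      split
      · next hcond => rw [hcond.1]; exact hws1
      · exact zero_mem _
  have haTval : ∀ (T : Set κ) (j : κ), aT T (⟨ULift.up n₀, j⟩ : ι) = if j ∈ T then wstar else 0 := by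
    intro T j
    by_cases hj : j ∈ T <;> simp [haT, hj]
  set F : Set κ → (↥E → ↥M) := fun T z => (s (aT T)) z.1 with hF
  have hFinj : Function.Injective F := by
    intro T T' hTT'
    set c : ι → ↥M := fun q => aT T q - aT T' q with hc
    have hcV : Vmem n₀ c := by
      constructor
      · intro q hq; simp only [hc]; rw [(haTV T).1 q hq, (haTV T').1 q hq, sub_zero]
      · intro q; exact sub_mem ((haTV T).2 q) ((haTV T').2 q)
    have hsc : ∀ z, (s c) z ∈ W (n₀+1) := by
      intro z
      by_cases hz : z ∈ E
      · have hceq : s c = s (aT T) - s (aT T') := by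
          rw [show c = aT T - aT T' from rfl, map_sub]
        rw [hceq, Finsupp.sub_apply]
        have := congrFun hTT' ⟨z, hz⟩
        simp only [hF] at this
        rw [this, sub_self]
        exact zero_mem _
      · exact hE n₀ le_rfl c hcV z hz (n₀+1)
    have hc1 : s c ∈ USet (σ (n₀+1)) (Z →₀ ↥M) := mem_USet_finsupp.mpr hsc
    have hc2 : c ∈ USet (σ (n₀+1)) (ι → ↥M) := by
      have := mem_USet_map p hc1
      rwa [hps c] at this
    have hcomp := mem_USet_pi.mp hc2
    ext j
    have hmem := hcomp (⟨ULift.up n₀, j⟩ : ι)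
    have hcval : c (⟨ULift.up n₀, j⟩ : ι)
        = (if j ∈ T then wstar else 0) - (if j ∈ T' then wstar else 0) := by
      simp only [hc]; rw [haTval, haTval]
    constructor
    · intro hjT
      by_contra hjT'
      rw [hcval, if_pos hjT, if_neg hjT', sub_zero] at hmem
      exact hws2 hmem
    · intro hjT'
      by_contra hjT
      rw [hcval, if_neg hjT, if_pos hjT', zero_sub, neg_mem_iff] at hmem
      exact hws2 hmem
  have hcard := Cardinal.mk_le_of_injective hFinj
  rw [Cardinal.mk_set] at hcard
  have hκcard : Cardinal.mk κ = Cardinal.mk ↥M + Cardinal.aleph0 := by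
    rw [hκ, Cardinal.mk_sum, Cardinal.mk_uLift, Cardinal.mk_nat]
    simp
  have htarget : Cardinal.mk (↥E → ↥M) ≤ Cardinal.mk ↥M + Cardinal.aleph0 := by
    rw [← Cardinal.power_def]
    calc Cardinal.mk ↥M ^ Cardinal.mk ↥E
        ≤ (Cardinal.mk ↥M + Cardinal.aleph0) ^ Cardinal.mk ↥E :=
          Cardinal.power_le_power_right (self_le_add_right _ _)
      _ ≤ Cardinal.mk ↥M + Cardinal.aleph0 := by
          refine Cardinal.pow_le le_add_self ?_
          rw [Cardinal.mk_coe_finset]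
          exact Cardinal.nat_lt_aleph0 _
  rw [hκcard] at hcard
  exact absurd (hcard.trans htarget) (not_le.mpr (Cardinal.cantor _))

end Chase

section Zorn

variable {R : Type u} [Ring R] {Mc : Type u} [AddCommGroup Mc] [Module R Mc] {X : Type u}

theorem lsum_map_sub {α : Type*} {G : Type*} [AddCommGroup G] (l : List α) (f g : α → G) :
    (l.map fun a => f a - g a).sum = (l.map f).sum - (l.map g).sum := by
  induction l with
  | nil => simp
  | cons a l ih => simp only [List.map_cons, List.sum_cons, ih]; abel

/-- An "equation" over `B = X → Mc` with constant in `S = X →₀ Mc`: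
a list of terms `(r, b)` standing for `∑ r • x_b = const`. -/
abbrev Eqn (R : Type u) [Ring R] (X Mc : Type u) [AddCommGroup Mc] [Module R Mc] : Type u :=
  List (R × (X → Mc)) × (X →₀ Mc)

/-- `e` is a true equation (under the tautological assignment `x_b := b`). -/
def TrueE (e : Eqn R X Mc) : Prop := (e.1.map fun t => t.1 • t.2).sum = ⇑e.2

/-- `g` satisfies `e`. -/
def SatE (g : (X → Mc) → (X →₀ Mc)) (e : Eqn R X Mc) : Prop :=
  (e.1.map fun t => t.1 • g t.2).sum = e.2

/-- `d` satisfies the homogenization of `e`. -/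
def HSatE (d : (X → Mc) → (X →₀ Mc)) (e : Eqn R X Mc) : Prop :=
  (e.1.map fun t => t.1 • d t.2).sum = 0

open Classical in
/-- Free variables of `L` relative to the assigned set `D` and the distinguished `bstar`. -/
noncomputable def sysFv (D : Set (X → Mc)) (bstar : X → Mc) (L : List (Eqn R X Mc)) :
    Finset (X → Mc) :=
  (L.flatMap fun e => e.1.map fun t => t.2).toFinset.filter fun b => ¬b ∈ D ∧ b ≠ bstar

open Classical in
/-- Encoding of one equation. -/
noncomputable def sysEnc (D : Set (X → Mc)) (bstar : X → Mc) (L : List (Eqn R X Mc))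
    (e : Eqn R X Mc) : List (R × Option (Fin (sysFv D bstar L).card)) :=
  e.1.map fun t =>
    (if t.2 ∈ D then (0 : R) else t.1,
     if h : t.2 ∈ sysFv D bstar L then some ((sysFv D bstar L).equivFin ⟨t.2, h⟩)
     else none)

/-- The finite pp-system encoding the homogenized system of `L`. -/
noncomputable def sysOf (D : Set (X → Mc)) (bstar : X → Mc) (L : List (Eqn R X Mc)) : Sys R :=
  { n := (sysFv D bstar L).card,
    eqs := L.map (sysEnc D bstar L) }

theorem sys_sum_eq (D : Set (X → Mc)) (bstar : X → Mc) (L : List (Eqn R X Mc))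
    (d : (X → Mc) → (X →₀ Mc)) (hd0 : ∀ b ∈ D, d b = 0) {e : Eqn R X Mc} (he : e ∈ L) :
    ((sysEnc D bstar L e).map
      fun t => t.1 • t.2.elim (d bstar)
        (fun j => d (((sysFv D bstar L).equivFin.symm j : {b // b ∈ sysFv D bstar L}) : X → Mc))).sum
    = (e.1.map fun t => t.1 • d t.2).sum := by
  classical
  rw [sysEnc, List.map_map]
  apply congrArg List.sum
  apply List.map_congr_left
  intro t ht
  by_cases hD : t.2 ∈ D
  · simp [Function.comp, hD, hd0 t.2 hD]
  · by_cases hfv : t.2 ∈ sysFv D bstar L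
    · simp [Function.comp, hD, hfv]
    · have hvl : t.2 ∈ (L.flatMap fun e => e.1.map fun t => t.2).toFinset := by
        rw [List.mem_toFinset]
        exact List.mem_flatMap.mpr ⟨e, he, List.mem_map.mpr ⟨t, ht, rfl⟩⟩
      have hbs : t.2 = bstar := by
        by_contra hne
        exact hfv (Finset.mem_filter.mpr ⟨hvl, hD, hne⟩)
      subst hbs
      simp [Function.comp, hD, hfv]

theorem UF_eq_USet (D : Set (X → Mc)) (bstar : X → Mc) (hbD : bstar ∉ D)
    (L : List (Eqn R X Mc)) :
    {w : X →₀ Mc | ∃ d : (X → Mc) → (X →₀ Mc),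
        (∀ b ∈ D, d b = 0) ∧ (∀ e ∈ L, HSatE d e) ∧ d bstar = w}
    = (USet (sysOf D bstar L) (X →₀ Mc) : Set (X →₀ Mc)) := by
  classical
  ext w
  constructor
  · rintro ⟨d, hd0, hsat, rfl⟩
    refine mem_USet_iff.mpr ⟨fun j =>
      d (((sysFv D bstar L).equivFin.symm j : {b // b ∈ sysFv D bstar L}) : X → Mc),
      fun eq heq => ?_⟩
    obtain ⟨e, he, rfl⟩ := List.mem_map.mp heq
    exact (sys_sum_eq D bstar L d hd0 he).trans (hsat e he)
  · intro hw
    obtain ⟨y, hy⟩ := mem_USet_iff.mp hw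
    set d : (X → Mc) → (X →₀ Mc) := fun b =>
      if b = bstar then w
      else if h : b ∈ sysFv D bstar L then y ((sysFv D bstar L).equivFin ⟨b, h⟩) else 0 with hd
    have hdb : d bstar = w := by rw [hd]; simp
    have hd0 : ∀ b ∈ D, d b = 0 := by
      intro b hb
      rw [hd]
      simp only
      rw [if_neg (by intro hh; rw [hh] at hb; exact hbD hb), dif_neg]
      intro hfv
      exact (Finset.mem_filter.mp hfv).2.1 hb
    have hdy : ∀ j, d (((sysFv D bstar L).equivFin.symm j :
        {b // b ∈ sysFv D bstar L}) : X → Mc) = y j := by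
      intro j
      set bb := (sysFv D bstar L).equivFin.symm j with hbb
      have hbmem : (bb : X → Mc) ∈ sysFv D bstar L := bb.2
      have hbne : (bb : X → Mc) ≠ bstar := (Finset.mem_filter.mp hbmem).2.2
      rw [hd]
      simp only
      rw [if_neg hbne, dif_pos hbmem]
      have : (⟨(bb : X → Mc), hbmem⟩ : {b // b ∈ sysFv D bstar L}) = bb := Subtype.ext rfl
      rw [this, hbb]
      simp
    refine ⟨d, hd0, fun e he => ?_, hdb⟩
    unfold HSatE
    have hcongr : (fun (t : R × Option (Fin (sysOf D bstar L).n)) =>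
        t.1 • t.2.elim (d bstar) (fun j => d (((sysFv D bstar L).equivFin.symm j :
          {b // b ∈ sysFv D bstar L}) : X → Mc)))
        = fun t => t.1 • t.2.elim w y := by
      funext t
      cases ht : t.2 with
      | none => simp [hdb]
      | some j => simp [hdy j]
    have h2 := hy (sysEnc D bstar L e) (List.mem_map.mpr ⟨e, he, rfl⟩)
    rw [← hcongr] at h2
    exact (sys_sum_eq D bstar L d hd0 he).symm.trans h2

theorem USet_finsupp_mono {σ τ : Sys R} (hne : Nonempty X)
    (hle : (USet σ (X →₀ Mc)) ≤ USet τ (X →₀ Mc)) : USet σ Mc ≤ USet τ Mc := by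
  intro u hu
  obtain ⟨x⟩ := hne
  have h1 : (Finsupp.single x u : X →₀ Mc) ∈ USet σ (X →₀ Mc) := by
    refine mem_USet_finsupp.mpr fun x' => ?_
    rcases eq_or_ne x' x with hx | hx
    · rw [hx, Finsupp.single_eq_same]; exact hu
    · rw [Finsupp.single_eq_of_ne' (fun hh => hx hh.symm)]; exact zero_mem _
  have h3 := mem_USet_finsupp.mp (hle h1) x
  rwa [Finsupp.single_eq_same] at h3

theorem USet_finsupp_congr {σ τ : Sys R} (h1 : USet σ Mc = USet τ Mc) :
    USet σ (X →₀ Mc) = USet τ (X →₀ Mc) := by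
  ext v
  rw [mem_USet_finsupp, mem_USet_finsupp]
  constructor <;> intro hv x
  · rw [← h1]; exact hv x
  · rw [h1]; exact hv x

open Classical in
theorem support_subset_foldr (L : List (Eqn R X Mc)) :
    ∀ e ∈ L, e.2.support ⊆ L.foldr (fun e acc => e.2.support ∪ acc) ∅ := by
  induction L with
  | nil => intro e he; cases he
  | cons a L ih =>
    intro e he
    rcases List.mem_cons.mp he with rfl | hmem
    · exact Finset.subset_union_left
    · exact (ih e hmem).trans Finset.subset_union_right

open Classical in
theorem trunc_sat (F : Finset X) (L : List (Eqn R X Mc)) (hL : ∀ e ∈ L, TrueE e)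
    (hFsub : ∀ e ∈ L, e.2.support ⊆ F) :
    ∀ e ∈ L, SatE (fun b => (Finsupp.onFinset F (fun x => if x ∈ F then b x else 0)
      (fun a ha => by by_contra hm; simp [hm] at ha) : X →₀ Mc)) e := by
  intro e he
  unfold SatE
  ext x
  rw [lsum_apply_finsupp]
  by_cases hx : x ∈ F
  · have h2 : (e.1.map fun t => ((t.1 • (Finsupp.onFinset F (fun x' => if x' ∈ F then t.2 x' else 0)
        (fun a ha => by by_contra hm; simp [hm] at ha) : X →₀ Mc)) : X →₀ Mc) x)
        = e.1.map fun t => t.1 • t.2 x := by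
      apply List.map_congr_left
      intro t _
      rw [Finsupp.smul_apply, Finsupp.onFinset_apply, if_pos hx]
    rw [h2]
    have h3 := congrFun (hL e he) x
    rw [lsum_apply_pi] at h3
    have h4 : (e.1.map fun t => (t.1 • t.2) x) = e.1.map fun t => t.1 • t.2 x := by
      apply List.map_congr_left; intro t _; rfl
    rw [h4] at h3
    exact h3
  · have h2 : (e.1.map fun t => ((t.1 • (Finsupp.onFinset F (fun x' => if x' ∈ F then t.2 x' else 0)
        (fun a ha => by by_contra hm; simp [hm] at ha) : X →₀ Mc)) : X →₀ Mc) x)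
        = e.1.map fun _ => (0 : Mc) := by
      apply List.map_congr_left
      intro t _
      rw [Finsupp.smul_apply, Finsupp.onFinset_apply, if_neg hx, smul_zero]
    rw [h2, lsum_map_zero]
    exact (Finsupp.notMem_support_iff.mp (fun hmem => hx (hFsub e he hmem))).symm

open Classical in
theorem exists_retraction (Mc : Type u) [AddCommGroup Mc] [Module R Mc]
    (DCC : ∀ σ : ℕ → Sys R, (∀ k, USet (σ (k+1)) Mc ≤ USet (σ k) Mc) →
      ∃ k, USet (σ k) Mc ≤ USet (σ (k+1)) Mc) (X : Type u) :
    ∃ r : (X → Mc) →ₗ[R] (X →₀ Mc), ∀ a : X →₀ Mc, r (fun x => a x) = a := by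
  classical
  rcases isEmpty_or_nonempty X with hX | hX
  · exact ⟨0, fun a => by ext x; exact (hX.false x).elim⟩
  set 𝒜 : Set (Set ((X → Mc) × (X →₀ Mc))) := {G | ∀ L : List (Eqn R X Mc), (∀ e ∈ L, TrueE e) →
      ∃ g : (X → Mc) → (X →₀ Mc), (∀ q ∈ G, g q.1 = q.2) ∧ ∀ e ∈ L, SatE g e} with h𝒜
  have hfun : ∀ G ∈ 𝒜, ∀ q ∈ G, ∀ q' ∈ G, q.1 = q'.1 → q.2 = q'.2 := by
    intro G hG q hq q' hq' heq
    obtain ⟨g, hmatch, -⟩ := hG [] (by simp)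
    rw [← hmatch q hq, ← hmatch q' hq', heq]
  have hempty : (∅ : Set ((X → Mc) × (X →₀ Mc))) ∈ 𝒜 := by
    intro L hL
    exact ⟨_, by simp, trunc_sat _ L hL (support_subset_foldr L)⟩
  have hchain : ∀ c ⊆ 𝒜, IsChain (· ⊆ ·) c → c.Nonempty → ∃ ub ∈ 𝒜, ∀ G ∈ c, G ⊆ ub := by
    intro c hc hch hcne
    have hmax : ∀ l : List (Set ((X → Mc) × (X →₀ Mc))), (∀ x ∈ l, x ∈ c) →
        ∃ ub ∈ c, ∀ x ∈ l, x ⊆ ub := by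
      intro l
      induction l with
      | nil => exact fun _ => ⟨hcne.choose, hcne.choose_spec, by simp⟩
      | cons a l ih =>
        intro hl
        obtain ⟨ub, hubc, hubl⟩ := ih (fun x hx => hl x (List.mem_cons_of_mem a hx))
        have hac : a ∈ c := hl a List.mem_cons_self
        rcases eq_or_ne a ub with rfl | hne
        · refine ⟨a, hac, fun x hx => ?_⟩
          rcases List.mem_cons.mp hx with rfl | hx
          · exact subset_rfl
          · exact hubl x hx
        · rcases hch hac hubc hne with hsub | hsub
          · refine ⟨ub, hubc, fun x hx => ?_⟩
            rcases List.mem_cons.mp hx with rfl | hx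
            · exact hsub
            · exact hubl x hx
          · refine ⟨a, hac, fun x hx => ?_⟩
            rcases List.mem_cons.mp hx with rfl | hx
            · exact subset_rfl
            · exact (hubl x hx).trans hsub
    have hfunU : ∀ q ∈ ⋃₀ c, ∀ q' ∈ ⋃₀ c, q.1 = q'.1 → q.2 = q'.2 := by
      rintro q ⟨G, hGc, hqG⟩ q' ⟨G', hG'c, hq'G'⟩ heq
      rcases eq_or_ne G G' with rfl | hne
      · exact hfun G (hc hGc) q hqG q' hq'G' heq
      · rcases hch hGc hG'c hne with hsub | hsub
        · exact hfun G' (hc hG'c) q (hsub hqG) q' hq'G' heq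
        · exact hfun G (hc hGc) q hqG q' (hsub hq'G') heq
    refine ⟨⋃₀ c, ?_, fun G hG => Set.subset_sUnion_of_mem hG⟩
    intro L hL
    set cG : (X → Mc) → Set ((X → Mc) × (X →₀ Mc)) := fun b =>
      if h : ∃ G ∈ c, ∃ v, (b, v) ∈ G then h.choose else hcne.choose with hcGdef
    have hcGc : ∀ b, cG b ∈ c := by
      intro b
      rw [hcGdef]
      simp only
      split
      · next hh => exact hh.choose_spec.1
      · exact hcne.choose_spec
    have hcGv : ∀ b, (∃ G ∈ c, ∃ v, (b, v) ∈ G) → ∃ v, (b, v) ∈ cG b := by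
      intro b hh
      rw [hcGdef]
      simp only
      rw [dif_pos hh]
      exact hh.choose_spec.2
    set vl : List (X → Mc) := L.flatMap fun e => e.1.map fun t => t.2 with hvldef
    obtain ⟨Gmax, hGmaxc, hGmaxub⟩ := hmax (vl.map cG) (by
      intro x hx
      obtain ⟨b, -, rfl⟩ := List.mem_map.mp hx
      exact hcGc b)
    obtain ⟨g₀, hg₀match, hg₀sat⟩ := hc hGmaxc L hL
    set g : (X → Mc) → (X →₀ Mc) := fun b =>
      if h : ∃ v, (b, v) ∈ ⋃₀ c then h.choose else g₀ b with hgdef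
    have hgmatch : ∀ q ∈ ⋃₀ c, g q.1 = q.2 := by
      intro q hq
      have hex : ∃ v, (q.1, v) ∈ ⋃₀ c := ⟨q.2, hq⟩
      rw [hgdef]
      simp only
      rw [dif_pos hex]
      exact hfunU (q.1, hex.choose) hex.choose_spec q hq rfl
    refine ⟨g, hgmatch, fun e he => ?_⟩
    have hgg₀ : ∀ t ∈ e.1, g t.2 = g₀ t.2 := by
      intro t ht
      by_cases hex : ∃ v, (t.2, v) ∈ ⋃₀ c
      · have hbvl : t.2 ∈ vl := List.mem_flatMap.mpr ⟨e, he, List.mem_map.mpr ⟨t, ht, rfl⟩⟩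
        obtain ⟨v, hv⟩ := hex
        obtain ⟨G, hGc, hvG⟩ := hv
        have hcGex : ∃ v', (t.2, v') ∈ cG t.2 := hcGv t.2 ⟨G, hGc, v, hvG⟩
        obtain ⟨v', hv'⟩ := hcGex
        have hsubmax : cG t.2 ⊆ Gmax := hGmaxub (cG t.2) (List.mem_map.mpr ⟨t.2, hbvl, rfl⟩)
        have hg₀v : g₀ t.2 = v' := hg₀match (t.2, v') (hsubmax hv')
        have hex' : ∃ v, (t.2, v) ∈ ⋃₀ c := ⟨v, G, hGc, hvG⟩
        have hgv : g t.2 = v' := by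
          rw [hgdef]
          simp only
          rw [dif_pos hex']
          exact hfunU (t.2, hex'.choose) hex'.choose_spec (t.2, v')
            (Set.mem_sUnion.mpr ⟨cG t.2, hcGc t.2, hv'⟩) rfl
        rw [hgv, hg₀v]
      · rw [hgdef]
        simp only
        rw [dif_neg hex]
    unfold SatE
    rw [List.map_congr_left (fun t ht => by rw [hgg₀ t ht])]
    exact hg₀sat e he
  obtain ⟨Gm, -, hGm⟩ := zorn_subset_nonempty 𝒜 hchain ∅ hempty
  have hGmA : Gm ∈ 𝒜 := hGm.1
  have htot : ∀ bstar : X → Mc, ∃ v, (bstar, v) ∈ Gm := by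
    intro bstar
    by_contra hb
    push_neg at hb
    set D : Set (X → Mc) := Prod.fst '' Gm with hD
    have hbD : bstar ∉ D := by
      rintro ⟨⟨b1, v1⟩, hq, rfl⟩
      exact hb v1 hq
    set Val : List (Eqn R X Mc) → Set (X →₀ Mc) := fun L =>
      {w | ∃ g : (X → Mc) → (X →₀ Mc), (∀ q ∈ Gm, g q.1 = q.2) ∧ (∀ e ∈ L, SatE g e) ∧ g bstar = w}
      with hValdef
    set UF : List (Eqn R X Mc) → Set (X →₀ Mc) := fun L =>
      {w | ∃ d : (X → Mc) → (X →₀ Mc), (∀ b ∈ D, d b = 0) ∧ (∀ e ∈ L, HSatE d e) ∧ d bstar = w}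
      with hUFdef
    have hValne : ∀ L, (∀ e ∈ L, TrueE e) → (Val L).Nonempty := by
      intro L hL
      obtain ⟨g, hmatch, hsat⟩ := hGmA L hL
      exact ⟨g bstar, g, hmatch, hsat, rfl⟩
    have hValmono : ∀ L L' : List (Eqn R X Mc), Val (L ++ L') ⊆ Val L := by
      rintro L L' w ⟨g, h1, h2, h3⟩
      exact ⟨g, h1, fun e he => h2 e (List.mem_append.mpr (Or.inl he)), h3⟩
    have hValmono' : ∀ L L' : List (Eqn R X Mc), Val (L ++ L') ⊆ Val L' := by
      rintro L L' w ⟨g, h1, h2, h3⟩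
      exact ⟨g, h1, fun e he => h2 e (List.mem_append.mpr (Or.inr he)), h3⟩
    have hUFmono : ∀ L L' : List (Eqn R X Mc), UF (L ++ L') ⊆ UF L := by
      rintro L L' w ⟨d, h1, h2, h3⟩
      exact ⟨d, h1, fun e he => h2 e (List.mem_append.mpr (Or.inl he)), h3⟩
    have hdiff : ∀ L w w', w ∈ Val L → w' ∈ Val L → w - w' ∈ UF L := by
      rintro L w w' ⟨g, hg1, hg2, hg3⟩ ⟨g', hg1', hg2', hg3'⟩
      refine ⟨fun b => g b - g' b, ?_, ?_, by show g bstar - g' bstar = w - w'; rw [hg3, hg3']⟩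
      · rintro b ⟨⟨b1, v1⟩, hq, rfl⟩
        show g (b1, v1).1 - g' (b1, v1).1 = 0
        rw [show g (b1, v1).1 = v1 from hg1 (b1, v1) hq,
          show g' (b1, v1).1 = v1 from hg1' (b1, v1) hq, sub_self]
      · intro e he
        unfold HSatE
        rw [List.map_congr_left (fun t _ => smul_sub t.1 (g t.2) (g' t.2)), lsum_map_sub,
          hg2 e he, hg2' e he, sub_self]
    have hadd : ∀ L w u, w ∈ Val L → u ∈ UF L → w + u ∈ Val L := by
      rintro L w u ⟨g, hg1, hg2, hg3⟩ ⟨d, hd1, hd2, hd3⟩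
      refine ⟨fun b => g b + d b, ?_, ?_, by show g bstar + d bstar = w + u; rw [hg3, hd3]⟩
      · intro q hq
        show g q.1 + d q.1 = q.2
        rw [hg1 q hq, hd1 q.1 ⟨q, hq, rfl⟩, add_zero]
      · intro e he
        unfold SatE
        rw [List.map_congr_left (fun t _ => smul_add t.1 (g t.2) (d t.2)), lsum_map_add,
          hg2 e he, hd2 e he, add_zero]
    have hUFU : ∀ L, UF L = (USet (sysOf D bstar L) (X →₀ Mc) : Set (X →₀ Mc)) :=
      fun L => UF_eq_USet D bstar hbD L
    have hmin : ∃ L₀ : List (Eqn R X Mc), (∀ e ∈ L₀, TrueE e) ∧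
        ∀ L, (∀ e ∈ L, TrueE e) → UF (L₀ ++ L) = UF L₀ := by
      by_contra hno
      push_neg at hno
      have hstep : ∀ L : {L : List (Eqn R X Mc) // ∀ e ∈ L, TrueE e},
          ∃ L' : {L : List (Eqn R X Mc) // ∀ e ∈ L, TrueE e},
            UF L'.1 ⊆ UF L.1 ∧ UF L'.1 ≠ UF L.1 := by
        rintro ⟨L, hL⟩
        obtain ⟨Lx, hLx, hne⟩ := hno L hL
        exact ⟨⟨L ++ Lx, fun e he => (List.mem_append.mp he).elim (hL e) (hLx e)⟩,
          hUFmono L Lx, hne⟩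
      set seq : ℕ → {L : List (Eqn R X Mc) // ∀ e ∈ L, TrueE e} :=
        fun k => (fun L => Classical.choose (hstep L))^[k] ⟨[], by simp⟩ with hseqdef
      have hseqstep : ∀ k, UF (seq (k+1)).1 ⊆ UF (seq k).1 ∧ UF (seq (k+1)).1 ≠ UF (seq k).1 := by
        intro k
        rw [hseqdef]
        simp only [Function.iterate_succ_apply']
        exact Classical.choose_spec (hstep _)
      set σs : ℕ → Sys R := fun k => sysOf D bstar (seq k).1 with hσs
      have hdesc : ∀ k, USet (σs (k+1)) Mc ≤ USet (σs k) Mc := by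
        intro k
        refine USet_finsupp_mono hX ?_
        intro w hw
        have h1 : w ∈ UF (seq (k+1)).1 := by rw [hUFU]; exact hw
        have h2 := (hseqstep k).1 h1
        rw [hUFU] at h2
        exact h2
      obtain ⟨k, hk⟩ := DCC σs hdesc
      refine (hseqstep k).2 ?_
      have hMceq : USet (σs (k+1)) Mc = USet (σs k) Mc := le_antisymm (hdesc k) hk
      have heq2 := USet_finsupp_congr (X := X) hMceq
      rw [hUFU, hUFU, heq2]
    obtain ⟨L₀, hL₀true, hL₀min⟩ := hmin
    obtain ⟨vstar, hvstar⟩ := hValne L₀ hL₀true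
    have hext : (insert (bstar, vstar) Gm) ∈ 𝒜 := by
      intro L hL
      have happ : ∀ e ∈ L₀ ++ L, TrueE e :=
        fun e he => (List.mem_append.mp he).elim (hL₀true e) (hL e)
      obtain ⟨w, hw⟩ := hValne (L₀ ++ L) happ
      have hwL₀ : w ∈ Val L₀ := hValmono L₀ L hw
      have hdm : vstar - w ∈ UF L₀ := hdiff L₀ vstar w hvstar hwL₀
      rw [← hL₀min L hL] at hdm
      have hvs : vstar ∈ Val (L₀ ++ L) := by
        have h5 := hadd (L₀ ++ L) w (vstar - w) hw hdm
        rwa [show w + (vstar - w) = vstar from by abel] at h5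
      obtain ⟨g, hg1, hg2, hg3⟩ := hvs
      refine ⟨g, ?_, fun e he => hg2 e (List.mem_append.mpr (Or.inr he))⟩
      intro q hq
      rcases Set.mem_insert_iff.mp hq with hq1 | hq2
      · rw [hq1]; exact hg3
      · exact hg1 q hq2
    have hsubm : insert (bstar, vstar) Gm ⊆ Gm := hGm.2 hext (Set.subset_insert _ _)
    exact hb vstar (hsubm (Set.mem_insert _ _))
  choose xv hxv using htot
  have hsat : ∀ e : Eqn R X Mc, TrueE e → SatE xv e := by
    intro e he
    obtain ⟨g, hmatch, hgsat⟩ := hGmA [e] (by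
      intro e' he'
      rw [List.mem_singleton.mp he']
      exact he)
    have hgx : ∀ b, g b = xv b := fun b => hmatch (b, xv b) (hxv b)
    have h1 := hgsat e (List.mem_singleton_self e)
    unfold SatE at h1 ⊢
    rwa [List.map_congr_left (fun (t : R × (X → Mc)) (_ : t ∈ e.1) => by rw [hgx t.2])] at h1
  have hadd' : ∀ b b', xv (b + b') = xv b + xv b' := by
    intro b b'
    have he : TrueE (([(1, b), (1, b'), (-1, b + b')], 0) : Eqn R X Mc) := by
      unfold TrueE
      simp [neg_smul]
    have h1 := hsat _ he
    unfold SatE at h1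
    simp [neg_smul] at h1
    have h2 : xv b + (xv b' + -xv (b + b')) + xv (b + b') = 0 + xv (b + b') := by rw [h1]
    rw [zero_add] at h2
    rw [← h2]
    abel
  have hsmul' : ∀ (r₀ : R) b, xv (r₀ • b) = r₀ • xv b := by
    intro r₀ b
    have he : TrueE (([(r₀, b), (-1, r₀ • b)], 0) : Eqn R X Mc) := by
      unfold TrueE
      simp [neg_smul]
    have h1 := hsat _ he
    unfold SatE at h1
    simp [neg_smul] at h1
    have h2 : r₀ • xv b + -xv (r₀ • b) + xv (r₀ • b) = 0 + xv (r₀ • b) := by rw [h1]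
    rw [zero_add] at h2
    rw [← h2]
    abel
  have hret : ∀ a : X →₀ Mc, xv (fun x => a x) = a := by
    intro a
    have he : TrueE (([(1, fun x => a x)], a) : Eqn R X Mc) := by
      unfold TrueE
      simp
    have h1 := hsat _ he
    unfold SatE at h1
    simp at h1
    exact h1
  exact ⟨{ toFun := xv, map_add' := hadd', map_smul' := hsmul' }, hret⟩

end Zorn

section Main

variable {R : Type u} [Ring R]

theorem addCl_subset_prodCl {M : ModuleCat.{u} R} (h : ProductComplete R M) :
    AddCl R M ⊆ ProdCl R M := by
  intro N hN
  obtain ⟨X, K, ⟨e⟩⟩ := hN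
  obtain ⟨r, hr⟩ := exists_retraction (R := R) (↥M) (fun σ hσ => chase h σ hσ) X
  -- the coercion `(X →₀ M) →ₗ (X → M)`
  set ι' : (X →₀ ↥M) →ₗ[R] (X → ↥M) :=
    { toFun := fun a x => a x,
      map_add' := fun a b => by funext x; simp,
      map_smul' := fun c a => by funext x; simp } with hι'
  have hrι : ∀ a, r (ι' a) = a := fun a => hr a
  have hinj : Function.Injective ι' := by
    intro a b hab
    ext x
    exact congrFun hab x
  -- projection onto the range of ι'
  set f : (X → ↥M) →ₗ[R] ↥(LinearMap.range ι') :=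
    LinearMap.codRestrict (LinearMap.range ι') (ι'.comp r) (fun b => ⟨r b, rfl⟩) with hf
  have hproj : ∀ x : ↥(LinearMap.range ι'), f (x : X → ↥M) = x := by
    rintro ⟨x, a, rfl⟩
    apply Subtype.ext
    show ι' (r (ι' a)) = ι' a
    rw [hrι]
  have hcompl : IsCompl (LinearMap.range ι') (LinearMap.ker f) := LinearMap.isCompl_of_proj hproj
  refine ⟨X, ModuleCat.of R (↥K × ↥(LinearMap.ker f)), ⟨?_⟩⟩
  exact (LinearEquiv.prodAssoc R ↥N ↥K ↥(LinearMap.ker f)).symm.trans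
    ((e.prodCongr (LinearEquiv.refl R ↥(LinearMap.ker f))).trans
      (((LinearEquiv.ofInjective ι' hinj).prodCongr (LinearEquiv.refl R ↥(LinearMap.ker f))).trans
        (Submodule.prodEquivOfIsCompl _ _ hcompl)))

theorem prodCl_subset_addCl {M : ModuleCat.{u} R} (h : ProductComplete R M) :
    ProdCl R M ⊆ AddCl R M := by
  intro N hN
  obtain ⟨X, K, ⟨e⟩⟩ := hN
  obtain ⟨Z, K₂, ⟨e₂⟩⟩ := h X (fun _ => M) (fun _ => M_mem_addCl M)
  exact ⟨Z, ModuleCat.of R (↥K × ↥K₂),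
    ⟨(LinearEquiv.prodAssoc R ↥N ↥K ↥K₂).symm.trans
      ((e.prodCongr (LinearEquiv.refl R ↥K₂)).trans e₂)⟩⟩

end Main

end Stmt5Aux

/-- for a product-complete module `M`, `Add(M) = Prod(M)`. -/
theorem stmt5 (M : ModuleCat.{u} R) (h : ProductComplete R M) :
    AddCl R M = ProdCl R M :=
  Set.Subset.antisymm (Stmt5Aux.addCl_subset_prodCl h) (Stmt5Aux.prodCl_subset_addCl h)
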